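/- If f : Ω → Ω differs from the identity map on only a finite set, then |Ω \ Ω_f| − |f(Ω \ Ω_f)| = |Ω \ f(Ω)| (all three sets being finite). -/

import Mathlib

variable {Ω : Type*}

def monoset (f : Ω → Ω) : Set Ω := {ω | f ⁻¹' {f ω} = {ω}}

def NearBijection (f : Ω → Ω) : Prop :=
  ∃ A B : Set Ω, Aᶜ.Finite ∧ Bᶜ.Finite ∧ Set.BijOn f A B

def AlmostEq (f g : Ω → Ω) : Prop := {ω | f ω ≠ g ω}.Finite

noncomputable def ind (f : Ω → Ω) : ℤ :=
  (((monoset f)ᶜ.ncard : ℤ) - ((f '' (monoset f)ᶜ).ncard : ℤ)) - ((Set.range f)ᶜ.ncard : ℤ)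

/-!
Points of `Ω \ Ω_f` and points outside `f(Ω)` can only occur in a finite set `U` which `f`
maps into itself and off which `f` is the identity (e.g. `U = S ∪ f(S)` with `S` the support
of `f`). Since `f` is injective on `Ω_f` and `f(Ω_f)` misses `f(Ω \ Ω_f)`, counting `f(U)`
in two ways gives `|Ω \ Ω_f| - |f(Ω \ Ω_f)| = |U| - |f(U)| = |U \ f(U)| = |Ω \ f(Ω)|`.
-/

open Set

variable {f : Ω → Ω}

lemma mem_monoset_iff {ω : Ω} : ω ∈ monoset f ↔ ∀ ω', f ω' = f ω → ω' = ω := by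
  simp only [monoset, mem_ofPred_eq, Set.ext_iff, mem_preimage, mem_singleton_iff]
  exact ⟨fun h ω' => (h ω').1, fun h ω' => ⟨h ω', fun e => e ▸ rfl⟩⟩

lemma injOn_monoset : InjOn f (monoset f) :=
  fun _ hx _ _ hxy => (mem_monoset_iff.1 hx _ hxy.symm).symm

lemma disjoint_image_monoset_image_compl : Disjoint (f '' monoset f) (f '' (monoset f)ᶜ) := by
  rw [disjoint_left]
  rintro _ ⟨x, hx, rfl⟩ ⟨y, hy, hyx⟩
  exact hy (mem_monoset_iff.1 hx y hyx ▸ hx)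

lemma ncard_image_add_ncard_compl_monoset {s : Set Ω} (hs : s.Finite)
    (hsub : (monoset f)ᶜ ⊆ s) :
    (f '' s).ncard + (monoset f)ᶜ.ncard = s.ncard + (f '' (monoset f)ᶜ).ncard := by
  have hC : (monoset f)ᶜ.Finite := hs.subset hsub
  have hM : (s ∩ monoset f).Finite := hs.subset inter_subset_left
  have hsplit : s = (s ∩ monoset f) ∪ (monoset f)ᶜ := by
    rw [inter_union_distrib_right, union_compl_self, inter_univ, union_eq_left.2 hsub]
  have hdisj : Disjoint (s ∩ monoset f) (monoset f)ᶜ :=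
    disjoint_compl_right.mono_left inter_subset_right
  have himage_disj : Disjoint (f '' (s ∩ monoset f)) (f '' (monoset f)ᶜ) :=
    disjoint_image_monoset_image_compl.mono_left (image_mono inter_subset_right)
  have hinj : (f '' (s ∩ monoset f)).ncard = (s ∩ monoset f).ncard :=
    (injOn_monoset.mono inter_subset_right).ncard_image
  conv_lhs => rw [hsplit, image_union, ncard_union_eq himage_disj (hM.image f) (hC.image f), hinj]
  conv_rhs => rw [hsplit, ncard_union_eq hdisj hM hC]
  ring

section FixedOutside

variable {U : Set Ω} (hfix : ∀ ⦃ω⦄, ω ∉ U → f ω = ω)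
include hfix

lemma compl_monoset_subset (hmaps : MapsTo f U U) : (monoset f)ᶜ ⊆ U := by
  intro ω hω
  by_contra hωU
  obtain ⟨ω', hω'f, hne⟩ : ∃ ω', f ω' = f ω ∧ ω' ≠ ω := by
    simpa [mem_monoset_iff] using hω
  rw [hfix hωU] at hω'f
  by_cases hω'U : ω' ∈ U
  · exact hωU (hω'f ▸ hmaps hω'U)
  · exact hne (hfix hω'U ▸ hω'f)

lemma compl_range_eq_diff_image : (range f)ᶜ = U \ f '' U := by
  ext x
  refine ⟨fun hx => ⟨?_, fun ⟨y, _, hy⟩ => hx ⟨y, hy⟩⟩, ?_⟩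
  · by_contra hxU
    exact hx ⟨x, hfix hxU⟩
  · rintro ⟨hxU, hxfU⟩ ⟨y, rfl⟩
    by_cases hyU : y ∈ U
    · exact hxfU ⟨y, hyU, rfl⟩
    · exact hyU (hfix hyU ▸ hxU)

end FixedOutside

lemma mapsTo_support_union_image : MapsTo f ({ω | f ω ≠ ω} ∪ f '' {ω | f ω ≠ ω})
    ({ω | f ω ≠ ω} ∪ f '' {ω | f ω ≠ ω}) := by
  intro ω hω
  by_cases hωfix : f ω = ω
  · rwa [hωfix]
  · exact Or.inr ⟨ω, hωfix, rfl⟩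

theorem stmt13_general (f : Ω → Ω) (h : {ω | f ω ≠ ω}.Finite) :
    (monoset f)ᶜ.Finite ∧ (f '' (monoset f)ᶜ).Finite ∧ (Set.range f)ᶜ.Finite ∧
    (((monoset f)ᶜ.ncard : ℤ) - ((f '' (monoset f)ᶜ).ncard : ℤ)) =
      ((Set.range f)ᶜ.ncard : ℤ) := by
  set U := {ω | f ω ≠ ω} ∪ f '' {ω | f ω ≠ ω}
  have hU : U.Finite := h.union (h.image f)
  have hmaps : MapsTo f U U := mapsTo_support_union_image
  have hfix : ∀ ⦃ω⦄, ω ∉ U → f ω = ω := fun _ hω => not_not.1 fun hne => hω (Or.inl hne)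
  have hC : (monoset f)ᶜ ⊆ U := compl_monoset_subset hfix hmaps
  have hR : (range f)ᶜ = U \ f '' U := compl_range_eq_diff_image hfix
  have hcount := ncard_image_add_ncard_compl_monoset hU hC
  have hdiff : (U \ f '' U).ncard + (f '' U).ncard = U.ncard :=
    ncard_sdiff_add_ncard_of_subset hmaps.image_subset hU
  refine ⟨hU.subset hC, (hU.subset hC).image f, hR ▸ hU.sdiff, ?_⟩
  rw [hR]
  omega

theorem stmt13 [Infinite Ω] (f : Ω → Ω) (h : {ω | f ω ≠ ω}.Finite) :
    (monoset f)ᶜ.Finite ∧ (f '' (monoset f)ᶜ).Finite ∧ (Set.range f)ᶜ.Finite ∧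
    (((monoset f)ᶜ.ncard : ℤ) - ((f '' (monoset f)ᶜ).ncard : ℤ)) =
      ((Set.range f)ᶜ.ncard : ℤ) :=
  stmt13_general f h
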